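/- Let N ≥ 1 and let b₀ ∈ ℂ^N be an initial condition. For the modified midpoint mass-preserving scheme there exists Δt₁ > 0 (depending only on ‖b₀‖₂) such that for any fixed 0 < Δt ≤ Δt₁ there exists an infinite sequence (bₙ)_{n≥0} in ℂ^N with, for every n ≥ 0 and every j = 1,…,N (indices extended by zero), b_{j,n+1} = b_{j,n} + Δt·( −i·((|b_{j,n}|² + |b_{j,n+1}|²)/2)·m_{j,n} + 2i \bar{m_{j,n}}( m_{j+1,n}² + m_{j−1,n}² ) ), where m_{j,n} = (b_{j,n} + b_{j,n+1})/2; i.e., the scheme can always be solved, for all time steps, at this fixed Δt. -/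

import Mathlib

/-!
Pairing the update at site `j` with the conjugate midpoint `m_j` shows that the scheme conserves
the mass exactly: the on-site term contributes `Re(-i μ |m_j|²) = 0` because its coefficient `μ`
is real, and the coupling terms are differences of fluxes across the interfaces `(j, j + 1)`,
which telescope and vanish at the boundary. One step is a fixed-point problem
`x = a + Δt K(a, x)` with a cubic nonlinearity `K`; when `‖a‖∞ ≤ M` and `Δt ≤ 1/(32 (M + 1)³)`
it maps the ball of radius `M + 1` into itself and halves distances there, so Banach's theorem
solves it. Since `‖a‖∞ ≤ √(mass a)` and the mass is conserved, the same `Δt` works at every step.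
-/

/-- The modified midpoint (mass-preserving) scheme relating `a = bₙ` to
`b = bₙ₊₁` with time step `Δt`, with `m j = (a j + b j)/2`. -/
def massScheme (N : ℕ) (Δt : ℝ) (a b : ℕ → ℂ) : Prop :=
  ∀ j ∈ Finset.Icc 1 N,
    b j = a j + (Δt : ℂ) *
      (-Complex.I * ((((Complex.normSq (a j) + Complex.normSq (b j)) / 2 : ℝ) : ℂ))
          * ((a j + b j) / 2)
        + 2 * Complex.I * (starRingEnd ℂ) ((a j + b j) / 2)
          * (((a (j + 1) + b (j + 1)) / 2) ^ 2 + ((a (j - 1) + b (j - 1)) / 2) ^ 2))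

open Complex ComplexConjugate Finset

/-- `x` and `y` are the midpoints at the left and the right site of an interface. -/
noncomputable def massFlux (x y : ℂ) : ℝ := 4 * (I * conj x ^ 2 * y ^ 2).re

lemma normSq_sub_normSq_eq_flux {a b p q : ℂ} {μ Δt : ℝ}
    (h : b = a + Δt * (-I * μ * ((a + b) / 2) + 2 * I * conj ((a + b) / 2) * (p ^ 2 + q ^ 2))) :
    normSq b - normSq a = Δt * (massFlux ((a + b) / 2) p - massFlux q ((a + b) / 2)) := by
  have hre := congrArg re h
  have him := congrArg im h
  simp only [massFlux, pow_two, add_re, add_im, mul_re, mul_im, neg_re, neg_im,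
    I_re, I_im, ofReal_re, ofReal_im, conj_re, conj_im, normSq_apply, div_re, div_im,
    re_ofNat, im_ofNat] at hre him ⊢
  linear_combination (a.re + b.re) * hre + (a.im + b.im) * him

noncomputable def mass (N : ℕ) (b : ℕ → ℂ) : ℝ := ∑ j ∈ Icc 1 N, normSq (b j)

theorem mass_eq_of_massScheme {N : ℕ} {Δt : ℝ} {a b : ℕ → ℂ}
    (ha₀ : a 0 = 0) (haN : a (N + 1) = 0) (hb₀ : b 0 = 0) (hbN : b (N + 1) = 0)
    (h : massScheme N Δt a b) : mass N b = mass N a := by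
  set m : ℕ → ℂ := fun j => (a j + b j) / 2
  set F : ℕ → ℝ := fun j => Δt * massFlux (m (j - 1)) (m j)
  have hsite : ∀ j ∈ Icc 1 N, normSq (b j) = normSq (a j) + (F (j + 1) - F j) := by
    intro j hj
    obtain ⟨k, rfl⟩ : ∃ k, j = k + 1 := Nat.exists_eq_add_one.mpr (mem_Icc.mp hj).1
    have := normSq_sub_normSq_eq_flux (h _ hj)
    simp only [F, m, Nat.add_sub_cancel] at this ⊢
    linear_combination this
  have hF₁ : F 1 = 0 := by simp [F, m, massFlux, ha₀, hb₀]
  have hFN : F (N + 1) = 0 := by simp [F, m, massFlux, haN, hbN]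
  rw [mass, sum_congr rfl hsite, sum_add_distrib, ← Ico_add_one_right_eq_Icc,
    sum_Ico_sub F (by omega), hF₁, hFN, sub_zero, add_zero, mass, Ico_add_one_right_eq_Icc]

lemma norm_mul_mul_sub_mul_mul_le {α : Type*} [NormedRing α] {u v w u' v' w' : α} {R : ℝ}
    (hv : ‖v‖ ≤ R) (hw : ‖w‖ ≤ R) (hu' : ‖u'‖ ≤ R) (hv' : ‖v'‖ ≤ R) :
    ‖u * v * w - u' * v' * w'‖ ≤ R ^ 2 * (‖u - u'‖ + ‖v - v'‖ + ‖w - w'‖) := by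
  have hR : 0 ≤ R := (norm_nonneg v).trans hv
  have split : u * v * w - u' * v' * w' =
      (u - u') * v * w + u' * (v - v') * w + u' * v' * (w - w') := by
    noncomm_ring
  calc ‖u * v * w - u' * v' * w'‖
      ≤ ‖u - u'‖ * ‖v‖ * ‖w‖ + ‖u'‖ * ‖v - v'‖ * ‖w‖ + ‖u'‖ * ‖v'‖ * ‖w - w'‖ := by
        rw [split]
        exact norm_add₃_le.trans (add_le_add_three norm_mul₃_le norm_mul₃_le norm_mul₃_le)
    _ ≤ ‖u - u'‖ * R * R + R * ‖v - v'‖ * R + R * R * ‖w - w'‖ := by bound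
    _ = R ^ 2 * (‖u - u'‖ + ‖v - v'‖ + ‖w - w'‖) := by ring

/-- The right-hand side of the scheme at a site `j`, with `u = b_{j,n}`, `v = b_{j,n+1}` and
`p`, `q` the midpoints at the sites `j + 1`, `j - 1`. -/
noncomputable def schemeRhs (u v p q : ℂ) : ℂ :=
  -I * (((normSq u + normSq v) / 2 : ℝ) : ℂ) * ((u + v) / 2)
    + 2 * I * conj ((u + v) / 2) * (p ^ 2 + q ^ 2)

lemma schemeRhs_eq (u v p q : ℂ) :
    schemeRhs u v p q = -I / 2 * (u * conj u * ((u + v) / 2) + v * conj v * ((u + v) / 2))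
      + 2 * I * (conj ((u + v) / 2) * p * p + conj ((u + v) / 2) * q * q) := by
  rw [schemeRhs, ofReal_div, ofReal_add, ← mul_conj, ← mul_conj]
  push_cast
  ring

lemma norm_midpoint_sub_le {u v u' v' : ℂ} {δ : ℝ} (hu : ‖u - u'‖ ≤ δ) (hv : ‖v - v'‖ ≤ δ) :
    ‖(u + v) / 2 - (u' + v') / 2‖ ≤ δ := by
  rw [show (u + v) / 2 - (u' + v') / 2 = ((u - u') + (v - v')) / 2 by ring, norm_div,
    RCLike.norm_ofNat]
  linarith [norm_add_le (u - u') (v - v')]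

lemma norm_midpoint_le {u v : ℂ} {R : ℝ} (hu : ‖u‖ ≤ R) (hv : ‖v‖ ≤ R) : ‖(u + v) / 2‖ ≤ R := by
  simpa using norm_midpoint_sub_le (u' := 0) (v' := 0) (by simpa using hu) (by simpa using hv)

theorem norm_schemeRhs_sub_le {u v p q u' v' p' q' : ℂ} {R δ : ℝ}
    (hu : ‖u‖ ≤ R) (hv : ‖v‖ ≤ R) (hp : ‖p‖ ≤ R) (hq : ‖q‖ ≤ R)
    (hu' : ‖u'‖ ≤ R) (hv' : ‖v'‖ ≤ R) (hp' : ‖p'‖ ≤ R) (hq' : ‖q'‖ ≤ R)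
    (huu' : ‖u - u'‖ ≤ δ) (hvv' : ‖v - v'‖ ≤ δ) (hpp' : ‖p - p'‖ ≤ δ) (hqq' : ‖q - q'‖ ≤ δ) :
    ‖schemeRhs u v p q - schemeRhs u' v' p' q'‖ ≤ 16 * R ^ 2 * δ := by
  have hRδ : 0 ≤ R ^ 2 * δ := by have := (norm_nonneg _).trans huu'; positivity
  have cubic {x y z x' y' z' : ℂ} (hy : ‖y‖ ≤ R) (hz : ‖z‖ ≤ R) (hx' : ‖x'‖ ≤ R)
      (hy' : ‖y'‖ ≤ R) (hxx' : ‖x - x'‖ ≤ δ) (hyy' : ‖y - y'‖ ≤ δ) (hzz' : ‖z - z'‖ ≤ δ) :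
      ‖x * y * z - x' * y' * z'‖ ≤ 3 * (R ^ 2 * δ) := by
    have := norm_mul_mul_sub_mul_mul_le (u := x) (w := z) (w' := z') hy hz hx' hy'
    nlinarith
  have conj_le {x : ℂ} (hx : ‖x‖ ≤ R) : ‖conj x‖ ≤ R := by rwa [norm_conj]
  have conj_sub_le {x x' : ℂ} (hx : ‖x - x'‖ ≤ δ) : ‖conj x - conj x'‖ ≤ δ := by
    rwa [← map_sub, norm_conj]
  have hm := norm_midpoint_le hu hv
  have hm' := norm_midpoint_le hu' hv'
  have hmm' := norm_midpoint_sub_le huu' hvv'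
  rw [schemeRhs_eq, schemeRhs_eq]
  set m := (u + v) / 2
  set m' := (u' + v') / 2
  calc _
      = ‖-I / 2 * ((u * conj u * m - u' * conj u' * m') + (v * conj v * m - v' * conj v' * m'))
          + 2 * I * ((conj m * p * p - conj m' * p' * p')
            + (conj m * q * q - conj m' * q' * q'))‖ := by
        congr 1; ring
    _ ≤ 1 / 2 * (‖u * conj u * m - u' * conj u' * m'‖ + ‖v * conj v * m - v' * conj v' * m'‖)
          + 2 * (‖conj m * p * p - conj m' * p' * p'‖ + ‖conj m * q * q - conj m' * q' * q'‖) := by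
        refine (norm_add_le _ _).trans (add_le_add ?_ ?_) <;>
          rw [norm_mul] <;> gcongr <;> simp [norm_add_le]
    _ ≤ 1 / 2 * (3 * (R ^ 2 * δ) + 3 * (R ^ 2 * δ))
          + 2 * (3 * (R ^ 2 * δ) + 3 * (R ^ 2 * δ)) := by
        gcongr
        · exact cubic (conj_le hu) hm hu' (conj_le hu') huu' (conj_sub_le huu') hmm'
        · exact cubic (conj_le hv) hm hv' (conj_le hv') hvv' (conj_sub_le hvv') hmm'
        · exact cubic hp hp (conj_le hm') hp' (conj_sub_le hmm') hpp' hpp'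
        · exact cubic hq hq (conj_le hm') hq' (conj_sub_le hmm') hqq' hqq'
    _ ≤ 16 * R ^ 2 * δ := by linarith

theorem norm_schemeRhs_le {u v p q : ℂ} {R : ℝ}
    (hu : ‖u‖ ≤ R) (hv : ‖v‖ ≤ R) (hp : ‖p‖ ≤ R) (hq : ‖q‖ ≤ R) :
    ‖schemeRhs u v p q‖ ≤ 16 * R ^ 3 := by
  have hR : ‖(0 : ℂ)‖ ≤ R := by simpa using (norm_nonneg u).trans hu
  have := norm_schemeRhs_sub_le hu hv hp hq hR hR hR hR
    (by simpa using hu) (by simpa using hv) (by simpa using hp) (by simpa using hq)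
  simpa [schemeRhs, pow_succ, mul_assoc] using this

noncomputable def siteRhs (a b : ℕ → ℂ) (j : ℕ) : ℂ :=
  schemeRhs (a j) (b j) ((a (j + 1) + b (j + 1)) / 2) ((a (j - 1) + b (j - 1)) / 2)

lemma massScheme_iff {N : ℕ} {Δt : ℝ} {a b : ℕ → ℂ} :
    massScheme N Δt a b ↔ ∀ j ∈ Icc 1 N, b j = a j + Δt * siteRhs a b j :=
  Iff.rfl

section SiteRhs

variable {R δ : ℝ} {a b c : ℕ → ℂ} {j : ℕ}

theorem norm_siteRhs_sub_le (ha : ∀ i ≤ j + 1, ‖a i‖ ≤ R) (hb : ∀ i, ‖b i‖ ≤ R)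
    (hc : ∀ i, ‖c i‖ ≤ R) (hbc : ∀ i, ‖b i - c i‖ ≤ δ) :
    ‖siteRhs a b j - siteRhs a c j‖ ≤ 16 * R ^ 2 * δ := by
  have hδ : 0 ≤ δ := (norm_nonneg _).trans (hbc 0)
  have haa (i : ℕ) : ‖a i - a i‖ ≤ δ := by simpa using hδ
  exact norm_schemeRhs_sub_le (ha j (by omega)) (hb j)
    (norm_midpoint_le (ha _ le_rfl) (hb _)) (norm_midpoint_le (ha _ (by omega)) (hb _))
    (ha j (by omega)) (hc j)
    (norm_midpoint_le (ha _ le_rfl) (hc _)) (norm_midpoint_le (ha _ (by omega)) (hc _))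
    (haa j) (hbc j) (norm_midpoint_sub_le (haa _) (hbc _)) (norm_midpoint_sub_le (haa _) (hbc _))

theorem norm_siteRhs_le (ha : ∀ i ≤ j + 1, ‖a i‖ ≤ R) (hb : ∀ i, ‖b i‖ ≤ R) :
    ‖siteRhs a b j‖ ≤ 16 * R ^ 3 :=
  norm_schemeRhs_le (ha j (by omega)) (hb j) (norm_midpoint_le (ha _ le_rfl) (hb _))
    (norm_midpoint_le (ha _ (by omega)) (hb _))

end SiteRhs

noncomputable def extendByZero (N : ℕ) (x : Fin N → ℂ) (j : ℕ) : ℂ :=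
  if h : 1 ≤ j ∧ j ≤ N then x ⟨j - 1, by omega⟩ else 0

section ExtendByZero

variable {N : ℕ}

@[simp] lemma extendByZero_zero (x : Fin N → ℂ) : extendByZero N x 0 = 0 := by
  simp [extendByZero]

@[simp] lemma extendByZero_add_one_self (x : Fin N → ℂ) : extendByZero N x (N + 1) = 0 := by
  simp [extendByZero]

lemma extendByZero_fin_add_one (x : Fin N → ℂ) (k : Fin N) : extendByZero N x (k + 1) = x k := by
  simp [extendByZero, Nat.succ_le_of_lt k.isLt]

lemma extendByZero_sub (x y : Fin N → ℂ) (j : ℕ) :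
    extendByZero N x j - extendByZero N y j = extendByZero N (x - y) j := by
  unfold extendByZero
  split_ifs <;> simp

lemma norm_extendByZero_le (x : Fin N → ℂ) (j : ℕ) : ‖extendByZero N x j‖ ≤ ‖x‖ := by
  unfold extendByZero
  split_ifs
  · exact norm_le_pi_norm x _
  · simp

end ExtendByZero

/-- One step of the scheme as a fixed-point problem; `x k` stands for the unknown `b_{k+1,n+1}`. -/
noncomputable def stepMap (N : ℕ) (Δt : ℝ) (a : ℕ → ℂ) (x : Fin N → ℂ) : Fin N → ℂ :=
  fun k => a (k + 1) + Δt * siteRhs a (extendByZero N x) (k + 1)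

section StepMap

open Metric Set

variable {N : ℕ} {M Δt : ℝ} {a : ℕ → ℂ}

lemma mul_sixteen_mul_pow_three_le_half (hM : 0 ≤ M) (hΔt₁ : Δt ≤ 1 / (32 * (M + 1) ^ 3)) :
    Δt * (16 * (M + 1) ^ 3) ≤ 1 / 2 := by
  have := (le_div_iff₀ (by positivity)).mp hΔt₁
  linarith

lemma norm_stepMap_sub_stepMap (x y : Fin N → ℂ) (k : Fin N) (hΔt : 0 ≤ Δt) :
    ‖stepMap N Δt a x k - stepMap N Δt a y k‖ =
      Δt * ‖siteRhs a (extendByZero N x) (k + 1) - siteRhs a (extendByZero N y) (k + 1)‖ := by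
  rw [stepMap, stepMap, add_sub_add_left_eq_sub, ← mul_sub, norm_mul, norm_real,
    Real.norm_of_nonneg hΔt]

lemma stepMap_mapsTo_closedBall (hΔt : 0 ≤ Δt) (hΔt₁ : Δt ≤ 1 / (32 * (M + 1) ^ 3))
    (ha : ∀ j ≤ N + 1, ‖a j‖ ≤ M) :
    MapsTo (stepMap N Δt a) (closedBall 0 (M + 1)) (closedBall 0 (M + 1)) := by
  intro x hx
  have hM : 0 ≤ M := (norm_nonneg _).trans (ha 0 (by omega))
  rw [mem_closedBall_zero_iff] at hx ⊢
  refine (pi_norm_le_iff_of_nonneg (by linarith)).mpr fun k => ?_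
  have hk := k.isLt
  have hrhs : ‖siteRhs a (extendByZero N x) (k + 1)‖ ≤ 16 * (M + 1) ^ 3 :=
    norm_siteRhs_le (fun i hi => (ha i (by omega)).trans (by linarith))
      (fun i => (norm_extendByZero_le x i).trans hx)
  calc ‖stepMap N Δt a x k‖
      ≤ ‖a (k + 1)‖ + Δt * ‖siteRhs a (extendByZero N x) (k + 1)‖ := by
        refine (norm_add_le _ _).trans_eq ?_
        rw [norm_mul, norm_real, Real.norm_of_nonneg hΔt]
    _ ≤ M + Δt * (16 * (M + 1) ^ 3) := by gcongr; exact ha _ (by omega)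
    _ ≤ M + 1 := by linarith [mul_sixteen_mul_pow_three_le_half hM hΔt₁]

lemma stepMap_lipschitzOnWith (hΔt : 0 ≤ Δt) (hΔt₁ : Δt ≤ 1 / (32 * (M + 1) ^ 3))
    (ha : ∀ j ≤ N + 1, ‖a j‖ ≤ M) :
    LipschitzOnWith (1 / 2) (stepMap N Δt a) (closedBall 0 (M + 1)) := by
  refine LipschitzOnWith.of_dist_le_mul fun x hx y hy => ?_
  have hM : 0 ≤ M := (norm_nonneg _).trans (ha 0 (by omega))
  rw [mem_closedBall_zero_iff] at hx hy
  rw [dist_eq_norm, dist_eq_norm, NNReal.coe_div, NNReal.coe_one, NNReal.coe_two]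
  refine (pi_norm_le_iff_of_nonneg (by positivity)).mpr fun k => ?_
  have hk := k.isLt
  have hrhs := norm_siteRhs_sub_le (j := k + 1)
    (fun i hi => (ha i (by omega)).trans (by linarith))
    (fun i => (norm_extendByZero_le x i).trans hx) (fun i => (norm_extendByZero_le y i).trans hy)
    (fun i => (extendByZero_sub x y i).symm ▸ norm_extendByZero_le (x - y) i)
  calc ‖(stepMap N Δt a x - stepMap N Δt a y) k‖
      = Δt * ‖siteRhs a (extendByZero N x) (k + 1) - siteRhs a (extendByZero N y) (k + 1)‖ :=
        norm_stepMap_sub_stepMap x y k hΔt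
    _ ≤ Δt * (16 * (M + 1) ^ 2) * ‖x - y‖ := by rw [mul_assoc]; gcongr
    _ ≤ Δt * (16 * (M + 1) ^ 3) * ‖x - y‖ := by
        gcongr
        · linarith
        · norm_num
    _ ≤ 1 / 2 * ‖x - y‖ := by gcongr; exact mul_sixteen_mul_pow_three_le_half hM hΔt₁

theorem exists_massScheme_step (hΔt : 0 ≤ Δt) (hΔt₁ : Δt ≤ 1 / (32 * (M + 1) ^ 3))
    (ha : ∀ j ≤ N + 1, ‖a j‖ ≤ M) :
    ∃ b : ℕ → ℂ, b 0 = 0 ∧ b (N + 1) = 0 ∧ massScheme N Δt a b := by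
  have hmaps := stepMap_mapsTo_closedBall hΔt hΔt₁ ha
  have hcontr : ContractingWith (1 / 2) (hmaps.restrict _ _ _) :=
    ⟨by norm_num, (stepMap_lipschitzOnWith hΔt hΔt₁ ha).mapsToRestrict hmaps⟩
  have hM : 0 ≤ M := (norm_nonneg _).trans (ha 0 (by omega))
  have h0 : (0 : Fin N → ℂ) ∈ closedBall 0 (M + 1) := mem_closedBall_self (by linarith)
  obtain ⟨x, -, hx, -⟩ :=
    hcontr.exists_fixedPoint' isClosed_closedBall.isComplete hmaps h0 (edist_ne_top _ _)
  refine ⟨extendByZero N x, extendByZero_zero x, extendByZero_add_one_self x, ?_⟩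
  rw [massScheme_iff]
  intro j hj
  obtain ⟨k, rfl⟩ : ∃ k : Fin N, j = k + 1 := ⟨⟨j - 1, by grind⟩, by grind⟩
  exact (extendByZero_fin_add_one x k).trans (congrFun hx k).symm

end StepMap

lemma norm_le_sqrt_mass {N : ℕ} {a : ℕ → ℂ} (ha₀ : a 0 = 0) (haN : a (N + 1) = 0) {j : ℕ}
    (hj : j ≤ N + 1) : ‖a j‖ ≤ √(mass N a) := by
  by_cases hj' : j ∈ Icc 1 N
  · rw [norm_def]
    exact Real.sqrt_le_sqrt (single_le_sum (f := fun i => normSq (a i))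
      (fun i _ => normSq_nonneg _) hj')
  · obtain rfl | rfl : j = 0 ∨ j = N + 1 := by grind
    · simp [ha₀]
    · simp [haN]

theorem exists_seq_of_forall_exists_step {α : Type*} {s : Set α} {r : α → α → Prop}
    (h : ∀ a ∈ s, ∃ b ∈ s, r a b) {a₀ : α} (ha₀ : a₀ ∈ s) :
    ∃ f : ℕ → α, f 0 = a₀ ∧ ∀ n, f n ∈ s ∧ r (f n) (f (n + 1)) := by
  choose! g hgs hgr using h
  have hmem (n : ℕ) : g^[n] a₀ ∈ s := Set.MapsTo.iterate hgs n ha₀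
  refine ⟨fun n => g^[n] a₀, rfl, fun n => ⟨hmem n, ?_⟩⟩
  simp only [Function.iterate_succ_apply']
  exact hgr _ (hmem n)

theorem mass_scheme_global_solvability_general
    (N : ℕ)
    (b0 : ℕ → ℂ) (h00 : b0 0 = 0) (h0N : b0 (N + 1) = 0) :
    ∃ Δt₁ > (0 : ℝ), ∀ Δt : ℝ, 0 < Δt → Δt ≤ Δt₁ →
      ∃ B : ℕ → ℕ → ℂ,
        (∀ n : ℕ, B n 0 = 0 ∧ B n (N + 1) = 0) ∧
        (∀ j, B 0 j = b0 j) ∧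
        (∀ n : ℕ, massScheme N Δt (B n) (B (n + 1))) := by
  refine ⟨1 / (32 * (√(mass N b0) + 1) ^ 3), by positivity, fun Δt hΔt hΔt₁ => ?_⟩
  let S : Set (ℕ → ℂ) := {a | a 0 = 0 ∧ a (N + 1) = 0 ∧ mass N a = mass N b0}
  have hstep : ∀ a ∈ S, ∃ b ∈ S, massScheme N Δt a b := by
    rintro a ⟨ha₀, haN, ha⟩
    obtain ⟨b, hb₀, hbN, hab⟩ := exists_massScheme_step hΔt.le hΔt₁
      fun j hj => ha ▸ norm_le_sqrt_mass ha₀ haN hj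
    exact ⟨b, ⟨hb₀, hbN, (mass_eq_of_massScheme ha₀ haN hb₀ hbN hab).trans ha⟩, hab⟩
  obtain ⟨B, hB₀, hB⟩ := exists_seq_of_forall_exists_step hstep ⟨h00, h0N, rfl⟩
  exact ⟨B, fun n => ⟨(hB n).1.1, (hB n).1.2.1⟩, fun j => by rw [hB₀], fun n => (hB n).2⟩

/-- Global solvability of the modified midpoint (mass-preserving)
scheme: for an initial condition `b₀` there is a `Δt₁ > 0` such that for every
fixed `0 < Δt ≤ Δt₁` there is an infinite sequence of iterates solving the
scheme at every step. -/
theorem mass_scheme_global_solvability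
    (N : ℕ) (hN : 1 ≤ N)
    (b0 : ℕ → ℂ) (h00 : b0 0 = 0) (h0N : b0 (N + 1) = 0) :
    ∃ Δt₁ > (0 : ℝ), ∀ Δt : ℝ, 0 < Δt → Δt ≤ Δt₁ →
      ∃ B : ℕ → ℕ → ℂ,
        (∀ n : ℕ, B n 0 = 0 ∧ B n (N + 1) = 0) ∧
        (∀ j, B 0 j = b0 j) ∧
        (∀ n : ℕ, massScheme N Δt (B n) (B (n + 1))) :=
  mass_scheme_global_solvability_general N b0 h00 h0N
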